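/- arXiv:1910.09751 — 7 statements merged into one kernel-verified Lean document; each statement's English description precedes it below -/
import Mathlib

section
/- Let (A, ρ_A, λ_A) and (B, ρ_B, λ_B) be ℤ-linear piques on finite abelian groups A and B, affording representations α and β of the free group ⟨R, L⟩ on two generators (α : R ↦ ρ_A, L ↦ λ_A and β : R ↦ ρ_B, L ↦ λ_B). If there is a pique isomorphism f : A → B (a bijection with f(0) = 0 and f(x ∘₁ y) = f(x) ∘₂ f(y) for all x, y), then for every element w of ⟨R, L⟩ the number of fixed points of the permutation w^α of A equals the number of fixed points of the permutation w^β of B; equivalently, the ordinary characters of the complexified representations coincide. -/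
/-- Isomorphic finite ℤ-linear piques afford representations of the free group
on two generators with the same permutation character: for every word `w`, the permutations
`w^α` of `A` and `w^β` of `B` have equally many fixed points (equivalently, the ordinary
characters of the complexified representations coincide). -/
theorem stmt2 (A B : Type*) [AddCommGroup A] [AddCommGroup B] [Finite A] [Finite B]
    (ρA lA : AddAut A) (ρB lB : AddAut B)
    (f : A → B) (hf : Function.Bijective f) (h0 : f 0 = 0)
    (hmul : ∀ x y : A, f (ρA x + lA y) = ρB (f x) + lB (f y)) :
    ∀ w : FreeGroup (Fin 2),
      Nat.card {a : A // (Multiplicative.toAdd ((FreeGroup.lift ![Multiplicative.ofAdd ρA, Multiplicative.ofAdd lA]) w)) a = a} =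
        Nat.card {b : B // (Multiplicative.toAdd ((FreeGroup.lift ![Multiplicative.ofAdd ρB, Multiplicative.ofAdd lB]) w)) b = b} := by
  -- f commutes with ρ and λ
  have hρ : ∀ x : A, f (ρA x) = ρB (f x) := by
    intro x
    have := hmul x 0
    simpa [h0] using this
  have hlam : ∀ y : A, f (lA y) = lB (f y) := by
    intro y
    have := hmul 0 y
    simpa [h0] using this
  -- f is additive
  have hadd : ∀ a b : A, f (a + b) = f a + f b := by
    intro a b
    have h2 := hmul (ρA.symm a) (lA.symm b)
    rw [← hρ, ← hlam] at h2
    simpa using h2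
  -- build additive equiv
  let e : A ≃+ B :=
    { toFun := f
      invFun := Function.surjInv hf.2
      left_inv := Function.leftInverse_surjInv hf
      right_inv := Function.rightInverse_surjInv hf.2
      map_add' := hadd }
  have he : ∀ a, e a = f a := fun _ => rfl
  have hesymm : ∀ a : A, e.symm (f a) = a := fun a => e.symm_apply_apply a
  have hfsymm : ∀ b : B, f (e.symm b) = b := fun b => e.apply_symm_apply b
  -- conjugation hom
  let c : Multiplicative (AddAut A) →* Multiplicative (AddAut B) :=
    { toFun := fun g => Multiplicative.ofAdd ((e.symm.trans (Multiplicative.toAdd g : A ≃+ A)).trans e)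
      map_one' := by apply Multiplicative.toAdd.injective; ext b; simp
      map_mul' := by intro g h; apply Multiplicative.toAdd.injective; ext b; simp [AddAut.add_apply] }
  have hc : ∀ g : Multiplicative (AddAut A), ∀ b : B, (Multiplicative.toAdd (c g)) b = f (Multiplicative.toAdd g (e.symm b)) := fun _ _ => rfl
  -- the two lifted homs agree via c
  have key : FreeGroup.lift ![Multiplicative.ofAdd ρB, Multiplicative.ofAdd lB] = c.comp (FreeGroup.lift ![Multiplicative.ofAdd ρA, Multiplicative.ofAdd lA]) := by
    apply FreeGroup.ext_hom
    intro i
    fin_cases i <;>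
    · simp only [FreeGroup.lift_apply_of, MonoidHom.comp_apply]
      apply Multiplicative.toAdd.injective
      ext b
      simp [hc, hρ, hlam, hfsymm]
  intro w
  have hw : ∀ b : B, (Multiplicative.toAdd ((FreeGroup.lift ![Multiplicative.ofAdd ρB, Multiplicative.ofAdd lB]) w)) b =
      f ((Multiplicative.toAdd ((FreeGroup.lift ![Multiplicative.ofAdd ρA, Multiplicative.ofAdd lA]) w)) (e.symm b)) := by
    intro b; rw [key]; rfl
  apply Nat.card_eq_of_bijective (fun p => ⟨f p.1, by
    rcases p with ⟨a, ha⟩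
    simp only [hw, hesymm, ha]⟩)
  constructor
  · rintro ⟨a, ha⟩ ⟨a', ha'⟩ h
    simpa [Subtype.ext_iff] using hf.1 (by simpa using congrArg Subtype.val h)
  · rintro ⟨b, hb⟩
    refine ⟨⟨e.symm b, ?_⟩, ?_⟩
    · apply hf.1
      rw [← hw, hb, hfsymm]
    · exact Subtype.ext (hfsymm b)
end

section
/- Let G be a finite cyclic group acting on finite sets X and Y. If for every g ∈ G the number of fixed points of g acting on X equals the number of fixed points of g acting on Y, then the G-sets X and Y are isomorphic; that is, there exists a bijection f : X → Y with f(g · x) = g · f(x) for all g ∈ G and x ∈ X. -/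
open MulAction

universe u v w

section Helpers

variable {G : Type u} [Group G]

/-- Fixed points correspond along an equivariant equivalence. -/
def fixEquiv {X : Type v} {Y : Type w} [SMul G X] [SMul G Y] (f : X ≃ Y)
    (hf : ∀ (g : G) (x : X), f (g • x) = g • f x) (g : G) :
    {x : X // g • x = x} ≃ {y : Y // g • y = y} :=
  Equiv.subtypeEquiv f (fun x => by
    constructor
    · intro hx; rw [← hf, hx]
    · intro hy; apply f.injective; rw [hf, hy])

/-- The complement of an orbit as a sub-action. -/
def orbitCompl (G : Type u) [Group G] {X : Type v} [MulAction G X] (x : X) :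
    SubMulAction G X where
  carrier := (orbit G x)ᶜ
  smul_mem' := by
    intro g z hz hmem
    apply hz
    obtain ⟨g', hg'⟩ := hmem
    exact ⟨g⁻¹ * g', by simp only []; rw [mul_smul]; show g⁻¹ • (g' • x) = z; rw [show g' • x = g • z from hg']; exact inv_smul_smul g z⟩

lemma mem_orbitCompl {X : Type v} [MulAction G X] {x z : X} :
    z ∈ orbitCompl G x ↔ z ∉ orbit G x := Iff.rfl

/-- Orbits with equal stabilizers are equivariantly equivalent. -/
lemma orbit_equiv_of_stabilizer_eq {X : Type v} {Y : Type w} [MulAction G X] [MulAction G Y]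
    {x : X} {y : Y} (hst : stabilizer G x = stabilizer G y) :
    ∃ φ : orbit G x ≃ orbit G y, ∀ (g : G) (w : orbit G x), φ (g • w) = g • φ w := by
  refine ⟨(orbitEquivQuotientStabilizer G x).trans ((Subgroup.quotientEquivOfEq hst).trans
    (orbitEquivQuotientStabilizer G y).symm), ?_⟩
  intro g w
  obtain ⟨q, rfl⟩ := (orbitEquivQuotientStabilizer G x).symm.surjective w
  obtain ⟨g', rfl⟩ := QuotientGroup.mk_surjective q
  have h1 : g • (orbitEquivQuotientStabilizer G x).symm (g' : G ⧸ stabilizer G x)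
      = (orbitEquivQuotientStabilizer G x).symm ((g * g' : G) : G ⧸ stabilizer G x) :=
    Subtype.ext (by simp [mul_smul])
  rw [h1]
  apply Subtype.ext
  simp [Subgroup.quotientEquivOfEq_mk, mul_smul]

end Helpers


section Main

variable {G : Type u} [Group G]

/-- Splitting fixed points across an orbit and its complement. -/
def fixSplit {X : Type v} [MulAction G X] (x : X) (g : G) [DecidablePred (· ∈ orbit G x)] :
    {z : X // g • z = z} ≃
      {w : orbit G x // g • w = w} ⊕ {w : ↥(orbitCompl G x) // g • w = w} where
  toFun z := if hz : (z : X) ∈ orbit G x then Sum.inl ⟨⟨z, hz⟩, Subtype.ext z.2⟩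
    else Sum.inr ⟨⟨z, hz⟩, Subtype.ext z.2⟩
  invFun w := Sum.elim (fun w => ⟨w.1.1, congrArg Subtype.val w.2⟩)
    (fun w => ⟨w.1.1, congrArg Subtype.val w.2⟩) w
  left_inv z := by
    by_cases hz : (z : X) ∈ orbit G x
    · simp [hz]
    · simp [hz]
  right_inv w := by
    rcases w with w | w
    · simp [w.1.2]
    · have : ¬ (w.1.1 : X) ∈ orbit G x := w.1.2
      simp [this]

lemma fix_card_split {X : Type v} [Finite X] [MulAction G X] (x : X) (g : G) :
    Nat.card {z : X // g • z = z} =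
      Nat.card {w : orbit G x // g • w = w} + Nat.card {w : ↥(orbitCompl G x) // g • w = w} := by
  classical
  rw [Nat.card_congr (fixSplit x g), Nat.card_sum]

lemma exists_zpowers_eq [IsCyclic G] (K : Subgroup G) : ∃ k : G, Subgroup.zpowers k = K := by
  obtain ⟨⟨k, hkK⟩, hk⟩ := IsCyclic.exists_generator (α := K)
  refine ⟨k, le_antisymm (Subgroup.zpowers_le.2 hkK) ?_⟩
  intro h hh
  obtain ⟨n, hn⟩ := hk ⟨h, hh⟩
  exact ⟨n, by simpa using congrArg Subtype.val hn⟩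

lemma stmt5_empty {G : Type u} [Group G] (X : Type v) (Y : Type w) [Finite Y]
    [MulAction G X] [MulAction G Y] (hX : IsEmpty X)
    (h : ∀ g : G, Nat.card {x : X // g • x = x} = Nat.card {y : Y // g • y = y}) :
    ∃ f : X ≃ Y, ∀ (g : G) (x : X), f (g • x) = g • f x := by
  have hY : IsEmpty Y := by
    by_contra hne
    obtain ⟨y⟩ := not_isEmpty_iff.1 hne
    have h1 : 0 < Nat.card {y : Y // (1 : G) • y = y} :=
      Nat.card_pos_iff.2 ⟨⟨⟨y, one_smul G y⟩⟩, inferInstance⟩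
    rw [← h 1] at h1
    have : IsEmpty {x : X // (1 : G) • x = x} := ⟨fun x => isEmptyElim x.1⟩
    simp [Nat.card_of_isEmpty] at h1
  exact ⟨Equiv.equivOfIsEmpty X Y, fun g x => isEmptyElim x⟩

end Main

theorem stmt5_aux : ∀ (n : ℕ) (G : Type u) [Group G] [IsCyclic G] [Finite G]
    (X : Type v) (Y : Type w) [Finite X] [Finite Y] [MulAction G X] [MulAction G Y],
    Nat.card X ≤ n →
    (∀ g : G, Nat.card {x : X // g • x = x} = Nat.card {y : Y // g • y = y}) →
    ∃ f : X ≃ Y, ∀ (g : G) (x : X), f (g • x) = g • f x := by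
  intro n
  induction n with
  | zero =>
    intro G _ _ _ X Y _ _ _ _ hcard h
    have hX : IsEmpty X := by
      have h0 : Nat.card X = 0 := Nat.le_zero.1 hcard
      exact (Nat.card_eq_zero.1 h0).resolve_right (fun hinf => Finite.not_infinite ‹Finite X› hinf)
    exact stmt5_empty X Y hX h
  | succ n ih =>
    intro G _ _ _ X Y _ _ _ _ hcard h
    classical
    by_cases hXe : IsEmpty X
    · exact stmt5_empty X Y hXe h
    have hXne : Nonempty X := not_isEmpty_iff.1 hXe
    -- pick a maximal stabilizer among all stabilizers of points of X and Y
    set S : Set (Subgroup G) :=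
      (Set.range fun x : X => stabilizer G x) ∪ (Set.range fun y : Y => stabilizer G y) with hS
    have hSfin : S.Finite := (Set.finite_range _).union (Set.finite_range _)
    have hSne : S.Nonempty := ⟨stabilizer G (Classical.arbitrary X), Or.inl ⟨_, rfl⟩⟩
    obtain ⟨K, hKS, hKmax⟩ := Set.Finite.exists_maximalFor id S hSfin hSne
    obtain ⟨k, hk⟩ := exists_zpowers_eq K
    have hkK : k ∈ K := hk ▸ Subgroup.mem_zpowers k
    -- both X and Y contain a point fixed by k
    have hfix : Nonempty {x : X // k • x = x} ∧ Nonempty {y : Y // k • y = y} := by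
      have hcards := h k
      rcases hKS with ⟨x₀, hx₀⟩ | ⟨y₀, hy₀⟩
      · have hx : k • x₀ = x₀ := by
          have hx₀' : stabilizer G x₀ = K := hx₀
          have : k ∈ stabilizer G x₀ := by rw [hx₀']; exact hkK
          exact this
        have h1 : Nonempty {x : X // k • x = x} := ⟨⟨x₀, hx⟩⟩
        have h2 : 0 < Nat.card {y : Y // k • y = y} := by
          rw [← hcards]; exact Nat.card_pos_iff.2 ⟨h1, inferInstance⟩
        exact ⟨h1, (Nat.card_pos_iff.1 h2).1⟩
      · have hy : k • y₀ = y₀ := by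
          have hy₀' : stabilizer G y₀ = K := hy₀
          have : k ∈ stabilizer G y₀ := by rw [hy₀']; exact hkK
          exact this
        have h1 : Nonempty {y : Y // k • y = y} := ⟨⟨y₀, hy⟩⟩
        have h2 : 0 < Nat.card {x : X // k • x = x} := by
          rw [hcards]; exact Nat.card_pos_iff.2 ⟨h1, inferInstance⟩
        exact ⟨(Nat.card_pos_iff.1 h2).1, h1⟩
    obtain ⟨⟨x, hxfix⟩⟩ := hfix.1
    obtain ⟨⟨y, hyfix⟩⟩ := hfix.2
    -- their stabilizers are exactly K by maximality
    have hstx : stabilizer G x = K := by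
      have hle : K ≤ stabilizer G x := by rw [← hk]; exact Subgroup.zpowers_le.2 hxfix
      exact le_antisymm (hKmax (Or.inl ⟨x, rfl⟩) hle) hle
    have hsty : stabilizer G y = K := by
      have hle : K ≤ stabilizer G y := by rw [← hk]; exact Subgroup.zpowers_le.2 hyfix
      exact le_antisymm (hKmax (Or.inr ⟨y, rfl⟩) hle) hle
    have hst : stabilizer G x = stabilizer G y := hstx.trans hsty.symm
    obtain ⟨φ, hφ⟩ := orbit_equiv_of_stabilizer_eq hst
    -- fixed-point counts match on the complements
    have hcount : ∀ g : G,
        Nat.card {z : ↥(orbitCompl G x) // g • z = z} =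
          Nat.card {z : ↥(orbitCompl G y) // g • z = z} := by
      intro g
      have h1 := fix_card_split x g
      have h2 := fix_card_split y g
      have h3 : Nat.card {w : orbit G x // g • w = w} =
          Nat.card {w : orbit G y // g • w = w} := Nat.card_congr (fixEquiv φ hφ g)
      have h4 := h g
      omega
    -- the complement is smaller
    have hXsplit : Nat.card X = Nat.card (orbit G x) + Nat.card ↥(orbitCompl G x) := by
      have e : X ≃ ↥(orbit G x) ⊕ ↥(orbitCompl G x) :=
        (Equiv.sumCompl (· ∈ orbit G x)).symm.trans
          (Equiv.sumCongr (Equiv.refl _) (Equiv.subtypeEquivRight fun z => Iff.rfl))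
      rw [Nat.card_congr e, Nat.card_sum]
    have horbpos : 0 < Nat.card (orbit G x) :=
      Nat.card_pos_iff.2 ⟨⟨⟨x, mem_orbit_self x⟩⟩, inferInstance⟩
    have hcard' : Nat.card ↥(orbitCompl G x) ≤ n := by omega
    obtain ⟨f', hf'⟩ := ih G (↥(orbitCompl G x)) (↥(orbitCompl G y)) hcard' hcount
    -- assemble the equivalence
    let eX : X ≃ ↥(orbit G x) ⊕ ↥(orbitCompl G x) :=
      (Equiv.sumCompl (· ∈ orbit G x)).symm.trans
        (Equiv.sumCongr (Equiv.refl _) (Equiv.subtypeEquivRight fun z => Iff.rfl))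
    let eY : Y ≃ ↥(orbit G y) ⊕ ↥(orbitCompl G y) :=
      (Equiv.sumCompl (· ∈ orbit G y)).symm.trans
        (Equiv.sumCongr (Equiv.refl _) (Equiv.subtypeEquivRight fun z => Iff.rfl))
    refine ⟨eX.trans ((Equiv.sumCongr φ f').trans eY.symm), ?_⟩
    intro g z
    by_cases hz : z ∈ orbit G x
    · have hgz : g • z ∈ orbit G x := by
        have := (g • (⟨z, hz⟩ : orbit G x)).2
        simpa using this
      have e1 : eX z = Sum.inl ⟨z, hz⟩ := by
        simp [eX, Equiv.sumCompl_symm_apply_of_pos hz]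
      have e2 : eX (g • z) = Sum.inl ⟨g • z, hgz⟩ := by
        simp [eX, Equiv.sumCompl_symm_apply_of_pos hgz]
      have hsub : (⟨g • z, hgz⟩ : orbit G x) = g • (⟨z, hz⟩ : orbit G x) := Subtype.ext rfl
      simp only [Equiv.trans_apply, e1, e2, Equiv.sumCongr_apply, Sum.map_inl, hsub, hφ]
      show eY.symm (Sum.inl (g • φ ⟨z, hz⟩)) = g • eY.symm (Sum.inl (φ ⟨z, hz⟩))
      have heY : ∀ w : orbit G y, eY.symm (Sum.inl w) = (w : Y) := by
        intro w; simp [eY]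
      rw [heY, heY]
      rfl
    · have hgz : ¬ g • z ∈ orbit G x := by
        intro hmem
        exact hz (by
          obtain ⟨g', hg'⟩ := hmem
          exact ⟨g⁻¹ * g', by
            show (g⁻¹ * g') • x = z
            rw [mul_smul]
            rw [show g' • x = g • z from hg']
            exact inv_smul_smul g z⟩)
      have e1 : eX z = Sum.inr ⟨z, hz⟩ := by
        simp only [eX, Equiv.trans_apply, Equiv.sumCompl_symm_apply_of_neg hz,
          Equiv.sumCongr_apply, Sum.map_inr]
        exact congrArg Sum.inr (Subtype.ext rfl)
      have e2 : eX (g • z) = Sum.inr ⟨g • z, hgz⟩ := by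
        simp only [eX, Equiv.trans_apply, Equiv.sumCompl_symm_apply_of_neg hgz,
          Equiv.sumCongr_apply, Sum.map_inr]
        exact congrArg Sum.inr (Subtype.ext rfl)
      have hsub : (⟨g • z, hgz⟩ : ↥(orbitCompl G x)) = g • (⟨z, hz⟩ : ↥(orbitCompl G x)) :=
        Subtype.ext rfl
      simp only [Equiv.trans_apply, e1, e2, Equiv.sumCongr_apply, Sum.map_inr, hsub, hf']
      show eY.symm (Sum.inr (g • f' ⟨z, hz⟩)) = g • eY.symm (Sum.inr (f' ⟨z, hz⟩))
      have heY : ∀ w : ↥(orbitCompl G y), eY.symm (Sum.inr w) = (w : Y) := by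
        intro w; simp [eY]; rfl
      rw [heY, heY]
      rfl

/-- Two permutation representations of a finite cyclic group with the same
character (fixed-point counts) are isomorphic as `G`-sets. -/
theorem stmt5 (G : Type*) [Group G] [IsCyclic G] [Finite G]
    (X Y : Type*) [Finite X] [Finite Y] [MulAction G X] [MulAction G Y]
    (h : ∀ g : G, Nat.card {x : X // g • x = x} = Nat.card {y : Y // g • y = y}) :
    ∃ f : X ≃ Y, ∀ (g : G) (x : X), f (g • x) = g • f x := by
  exact stmt5_aux (Nat.card X) G X Y le_rfl h
end

section
/- Let p be a prime number and k a positive integer, and let (ρ₁, λ₁) and (ρ₂, λ₂) be two ℤ-linear pique structures on ℤ/p^k (so ρᵢ, λᵢ are automorphisms of ℤ/p^k, given by multiplication by units) having the same permutation character. Assume one of the following: (a) p is odd; (b) p = 2 and k ∈ {1, 2}; (c) p = 2 and k > 2, and for each i = 1, 2 the subgroup of the automorphism group of ℤ/2^k generated by {ρᵢ, λᵢ} (the inner multiplication group of the pique) is cyclic. Then the two piques are permutationally similar: there exists a permutation π of the set ℤ/p^k with π(ρ₁(x)) = ρ₂(π(x)) and π(λ₁(x)) = λ₂(π(x)) for all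 x. -/
/-- The multiplicative group structure (composition) that `AddAut A` carried in older Mathlib. -/
instance AddAut.groupByComp (A : Type*) [Add A] : Group (AddAut A) where
  mul g h := AddEquiv.trans h g
  one := AddEquiv.refl _
  inv := AddEquiv.symm
  mul_assoc _ _ _ := rfl
  one_mul _ := rfl
  mul_one _ := rfl
  inv_mul_cancel := AddEquiv.self_trans_symm


open Finset
open scoped Classical

set_option linter.unusedSectionVars false
set_option maxHeartbeats 1000000

variable {G X : Type*} [CommGroup G] [Fintype X]

def stabSet (a : G →* Equiv.Perm X) (x : X) : Set G := {g | a g x = x}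

lemma appmul (a : G →* Equiv.Perm X) (g h : G) (z : X) : a (g * h) z = a g (a h z) := by
  rw [map_mul]; rfl

lemma stabSet_apply (a : G →* Equiv.Perm X) (g : G) (x : X) :
    stabSet a (a g x) = stabSet a x := by
  ext h
  simp only [stabSet, Set.mem_setOf_eq]
  have comm : a h (a g x) = a g (a h x) := by
    rw [← appmul, ← appmul, mul_comm]
  rw [comm]
  exact ⟨fun hh => (a g).injective hh, fun hh => by rw [hh]⟩

lemma t_empty (a₁ a₂ : G →* Equiv.Perm X) (s t : Finset X)
    (hcnt : ∀ H : Set G, (s.filter fun z => stabSet a₁ z = H).card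
        = (t.filter fun z => stabSet a₂ z = H).card)
    (hs : s = ∅) : t = ∅ := by
  by_contra hne
  obtain ⟨y, hy⟩ := Finset.nonempty_iff_ne_empty.mpr hne
  have h0 := hcnt (stabSet a₂ y)
  rw [hs] at h0
  simp only [Finset.filter_empty, Finset.card_empty] at h0
  have h1 : y ∈ t.filter fun z => stabSet a₂ z = stabSet a₂ y := by simp [hy]
  have := Finset.card_pos.mpr ⟨y, h1⟩
  omega

theorem core_aux (a₁ a₂ : G →* Equiv.Perm X) :
    ∀ N (s t : Finset X), s.card ≤ N →
    (∀ g x, x ∈ s → a₁ g x ∈ s) →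
    (∀ g y, y ∈ t → a₂ g y ∈ t) →
    (∀ H : Set G, (s.filter fun z => stabSet a₁ z = H).card
        = (t.filter fun z => stabSet a₂ z = H).card) →
    ∃ π : X → X, Set.BijOn π ↑s ↑t ∧ ∀ g x, x ∈ s → π (a₁ g x) = a₂ g (π x) := by
  intro N
  induction N with
  | zero =>
    intro s t hcard _ _ hcnt
    have hs : s = ∅ := Finset.card_eq_zero.mp (Nat.le_zero.mp hcard)
    have ht : t = ∅ := t_empty a₁ a₂ s t hcnt hs
    refine ⟨id, ?_, ?_⟩
    · rw [hs, ht]; simp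
    · intro g x hx; rw [hs] at hx; simp at hx
  | succ N ih =>
    intro s t hcard hcl₁ hcl₂ hcnt
    rcases Finset.eq_empty_or_nonempty s with hs | ⟨x, hx⟩
    · exact ih s t (by simp [hs]) hcl₁ hcl₂ hcnt
    -- pick y with matching stabilizer class
    have hxcls : x ∈ s.filter fun z => stabSet a₁ z = stabSet a₁ x := by simp [hx]
    have hpos : 0 < (t.filter fun z => stabSet a₂ z = stabSet a₁ x).card := by
      rw [← hcnt]; exact Finset.card_pos.mpr ⟨x, hxcls⟩
    obtain ⟨y, hymem⟩ := Finset.card_pos.mp hpos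
    rw [Finset.mem_filter] at hymem
    obtain ⟨hyt, hyH⟩ := hymem
    -- orbits
    set O₁ : Finset X := univ.filter (fun z => ∃ g, a₁ g x = z) with hO₁def
    set O₂ : Finset X := univ.filter (fun z => ∃ g, a₂ g y = z) with hO₂def
    have memO₁ : ∀ z, z ∈ O₁ ↔ ∃ g, a₁ g x = z := by intro z; simp [hO₁def]
    have memO₂ : ∀ z, z ∈ O₂ ↔ ∃ g, a₂ g y = z := by intro z; simp [hO₂def]
    -- transfer
    have trans12 : ∀ c g : G, a₁ c x = a₁ g x → a₂ c y = a₂ g y := by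
      intro c g h
      have h1 : a₁ (g⁻¹ * c) x = x := by
        rw [appmul, h, ← appmul, inv_mul_cancel, map_one, Equiv.Perm.one_apply]
      have h2 : (g⁻¹ * c) ∈ stabSet a₂ y := by
        rw [hyH]; exact h1
      have h3 : a₂ (g⁻¹ * c) y = y := h2
      calc a₂ c y = a₂ (g * (g⁻¹ * c)) y := by rw [mul_inv_cancel_left]
        _ = a₂ g (a₂ (g⁻¹ * c) y) := by rw [appmul]
        _ = a₂ g y := by rw [h3]
    have trans21 : ∀ c g : G, a₂ c y = a₂ g y → a₁ c x = a₁ g x := by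
      intro c g h
      have h1 : a₂ (g⁻¹ * c) y = y := by
        rw [appmul, h, ← appmul, inv_mul_cancel, map_one, Equiv.Perm.one_apply]
      have h2 : (g⁻¹ * c) ∈ stabSet a₁ x := by
        rw [← hyH]; exact h1
      have h3 : a₁ (g⁻¹ * c) x = x := h2
      calc a₁ c x = a₁ (g * (g⁻¹ * c)) x := by rw [mul_inv_cancel_left]
        _ = a₁ g (a₁ (g⁻¹ * c) x) := by rw [appmul]
        _ = a₁ g x := by rw [h3]
    set β : X → X := fun z => if h : ∃ g, a₁ g x = z then a₂ (Classical.choose h) y else z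
      with hβdef
    set γ : X → X := fun z => if h : ∃ g, a₂ g y = z then a₁ (Classical.choose h) x else z
      with hγdef
    have keyβ : ∀ g, β (a₁ g x) = a₂ g y := by
      intro g
      have hex : ∃ g', a₁ g' x = a₁ g x := ⟨g, rfl⟩
      rw [hβdef]
      simp only [dif_pos hex]
      exact trans12 _ _ (Classical.choose_spec hex)
    have keyγ : ∀ g, γ (a₂ g y) = a₁ g x := by
      intro g
      have hex : ∃ g', a₂ g' y = a₂ g y := ⟨g, rfl⟩
      rw [hγdef]
      simp only [dif_pos hex]
      exact trans21 _ _ (Classical.choose_spec hex)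
    have hxO₁ : x ∈ O₁ := (memO₁ x).mpr ⟨1, by rw [map_one]; rfl⟩
    have hO₁s : O₁ ⊆ s := by
      intro z hz
      obtain ⟨g, hg⟩ := (memO₁ z).mp hz
      rw [← hg]; exact hcl₁ g x hx
    have hO₂t : O₂ ⊆ t := by
      intro z hz
      obtain ⟨g, hg⟩ := (memO₂ z).mp hz
      rw [← hg]; exact hcl₂ g y hyt
    have hstabO₁ : ∀ z ∈ O₁, stabSet a₁ z = stabSet a₁ x := by
      intro z hz
      obtain ⟨g, hg⟩ := (memO₁ z).mp hz
      rw [← hg, stabSet_apply]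
    have hstabO₂ : ∀ z ∈ O₂, stabSet a₂ z = stabSet a₁ x := by
      intro z hz
      obtain ⟨g, hg⟩ := (memO₂ z).mp hz
      rw [← hg, stabSet_apply, hyH]
    have cardO : O₁.card = O₂.card := by
      apply Finset.card_bij' (fun z _ => β z) (fun z _ => γ z)
      · intro z hz
        obtain ⟨g, hg⟩ := (memO₁ z).mp hz
        rw [← hg, keyβ]
        exact (memO₂ _).mpr ⟨g, rfl⟩
      · intro z hz
        obtain ⟨g, hg⟩ := (memO₂ z).mp hz
        rw [← hg, keyγ]
        exact (memO₁ _).mpr ⟨g, rfl⟩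
      · intro z hz
        obtain ⟨g, hg⟩ := (memO₁ z).mp hz
        rw [← hg, keyβ, keyγ]
      · intro z hz
        obtain ⟨g, hg⟩ := (memO₂ z).mp hz
        rw [← hg, keyγ, keyβ]
    -- new sets
    set s' := s \ O₁ with hs'def
    set t' := t \ O₂ with ht'def
    have hcl₁' : ∀ g z, z ∈ s' → a₁ g z ∈ s' := by
      intro g z hz
      rw [hs'def, Finset.mem_sdiff] at hz ⊢
      refine ⟨hcl₁ g z hz.1, ?_⟩
      intro hmem
      obtain ⟨g', hg'⟩ := (memO₁ _).mp hmem
      exact hz.2 ((memO₁ z).mpr ⟨g⁻¹ * g', by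
        rw [appmul, hg', ← appmul, inv_mul_cancel, map_one]; rfl⟩)
    have hcl₂' : ∀ g z, z ∈ t' → a₂ g z ∈ t' := by
      intro g z hz
      rw [ht'def, Finset.mem_sdiff] at hz ⊢
      refine ⟨hcl₂ g z hz.1, ?_⟩
      intro hmem
      obtain ⟨g', hg'⟩ := (memO₂ _).mp hmem
      exact hz.2 ((memO₂ z).mpr ⟨g⁻¹ * g', by
        rw [appmul, hg', ← appmul, inv_mul_cancel, map_one]; rfl⟩)
    have hfO₁ : ∀ H' : Set G, O₁.filter (fun z => stabSet a₁ z = H')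
        = if stabSet a₁ x = H' then O₁ else ∅ := by
      intro H'
      split_ifs with hH'
      · apply Finset.filter_true_of_mem; intro z hz; rw [hstabO₁ z hz, hH']
      · apply Finset.filter_false_of_mem; intro z hz; rw [hstabO₁ z hz]; exact hH'
    have hfO₂ : ∀ H' : Set G, O₂.filter (fun z => stabSet a₂ z = H')
        = if stabSet a₁ x = H' then O₂ else ∅ := by
      intro H'
      split_ifs with hH'
      · apply Finset.filter_true_of_mem; intro z hz; rw [hstabO₂ z hz, hH']
      · apply Finset.filter_false_of_mem; intro z hz; rw [hstabO₂ z hz]; exact hH'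
    have hcard₁ : ∀ H' : Set G, (s'.filter fun z => stabSet a₁ z = H').card
        = (s.filter fun z => stabSet a₁ z = H').card
          - (O₁.filter fun z => stabSet a₁ z = H').card := by
      intro H'
      have h1 : (s'.filter fun z => stabSet a₁ z = H')
          = (s.filter fun z => stabSet a₁ z = H') \ (O₁.filter fun z => stabSet a₁ z = H') := by
        ext z
        simp only [hs'def, Finset.mem_filter, Finset.mem_sdiff]
        tauto
      have h2 : (O₁.filter fun z => stabSet a₁ z = H') ⊆ (s.filter fun z => stabSet a₁ z = H') :=
        Finset.filter_subset_filter _ hO₁s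
      rw [h1, Finset.card_sdiff_of_subset h2]
    have hcard₂ : ∀ H' : Set G, (t'.filter fun z => stabSet a₂ z = H').card
        = (t.filter fun z => stabSet a₂ z = H').card
          - (O₂.filter fun z => stabSet a₂ z = H').card := by
      intro H'
      have h1 : (t'.filter fun z => stabSet a₂ z = H')
          = (t.filter fun z => stabSet a₂ z = H') \ (O₂.filter fun z => stabSet a₂ z = H') := by
        ext z
        simp only [ht'def, Finset.mem_filter, Finset.mem_sdiff]
        tauto
      have h2 : (O₂.filter fun z => stabSet a₂ z = H') ⊆ (t.filter fun z => stabSet a₂ z = H') :=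
        Finset.filter_subset_filter _ hO₂t
      rw [h1, Finset.card_sdiff_of_subset h2]
    have hcnt' : ∀ H' : Set G, (s'.filter fun z => stabSet a₁ z = H').card
        = (t'.filter fun z => stabSet a₂ z = H').card := by
      intro H'
      rw [hcard₁ H', hcard₂ H', hcnt H', hfO₁ H', hfO₂ H']
      split_ifs with hH'
      · rw [cardO]
      · rfl
    have hO₁pos : 0 < O₁.card := Finset.card_pos.mpr ⟨x, hxO₁⟩
    have hs'le : s'.card ≤ N := by
      rw [hs'def, Finset.card_sdiff_of_subset hO₁s]
      have := Finset.card_le_card hO₁s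
      omega
    obtain ⟨π', hbij', hequi'⟩ := ih s' t' hs'le hcl₁' hcl₂' hcnt'
    set π : X → X := fun z => if z ∈ O₁ then β z else π' z with hπdef
    -- key facts
    have hβO₂ : ∀ z ∈ O₁, β z ∈ O₂ := by
      intro z hz
      obtain ⟨g, hg⟩ := (memO₁ z).mp hz
      rw [← hg, keyβ]
      exact (memO₂ _).mpr ⟨g, rfl⟩
    have hπeq : ∀ z ∈ O₁, π z = β z := by intro z hz; rw [hπdef]; simp [hz]
    have hπeq' : ∀ z, z ∉ O₁ → π z = π' z := by intro z hz; rw [hπdef]; simp [hz]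
    refine ⟨π, ⟨?_, ?_, ?_⟩, ?_⟩
    · -- MapsTo
      intro z hz
      rw [Finset.mem_coe] at hz ⊢
      by_cases hzO : z ∈ O₁
      · rw [hπeq z hzO]; exact hO₂t (hβO₂ z hzO)
      · rw [hπeq' z hzO]
        have hz' : z ∈ s' := by rw [hs'def, Finset.mem_sdiff]; exact ⟨hz, hzO⟩
        have := hbij'.mapsTo (Finset.mem_coe.mpr hz')
        rw [Finset.mem_coe, ht'def, Finset.mem_sdiff] at this
        exact this.1
    · -- InjOn
      intro z hz w hw heq
      rw [Finset.mem_coe] at hz hw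
      by_cases hzO : z ∈ O₁ <;> by_cases hwO : w ∈ O₁
      · obtain ⟨g, hg⟩ := (memO₁ z).mp hzO
        obtain ⟨g', hg'⟩ := (memO₁ w).mp hwO
        rw [hπeq z hzO, hπeq w hwO, ← hg, ← hg', keyβ, keyβ] at heq
        rw [← hg, ← hg']
        exact trans21 g g' heq
      · exfalso
        have h1 : π z ∈ O₂ := by rw [hπeq z hzO]; exact hβO₂ z hzO
        have hw' : w ∈ s' := by rw [hs'def, Finset.mem_sdiff]; exact ⟨hw, hwO⟩
        have h2 := hbij'.mapsTo (Finset.mem_coe.mpr hw')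
        rw [Finset.mem_coe, ht'def, Finset.mem_sdiff] at h2
        rw [hπeq' w hwO] at heq
        rw [heq] at h1
        exact h2.2 h1
      · exfalso
        have h1 : π w ∈ O₂ := by rw [hπeq w hwO]; exact hβO₂ w hwO
        have hz' : z ∈ s' := by rw [hs'def, Finset.mem_sdiff]; exact ⟨hz, hzO⟩
        have h2 := hbij'.mapsTo (Finset.mem_coe.mpr hz')
        rw [Finset.mem_coe, ht'def, Finset.mem_sdiff] at h2
        rw [hπeq' z hzO] at heq
        rw [← heq] at h1
        exact h2.2 h1
      · have hz' : z ∈ s' := by rw [hs'def, Finset.mem_sdiff]; exact ⟨hz, hzO⟩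
        have hw' : w ∈ s' := by rw [hs'def, Finset.mem_sdiff]; exact ⟨hw, hwO⟩
        rw [hπeq' z hzO, hπeq' w hwO] at heq
        exact hbij'.injOn (Finset.mem_coe.mpr hz') (Finset.mem_coe.mpr hw') heq
    · -- SurjOn
      intro w hw
      rw [Finset.mem_coe] at hw
      by_cases hwO : w ∈ O₂
      · obtain ⟨g, hg⟩ := (memO₂ w).mp hwO
        have hmem : a₁ g x ∈ O₁ := (memO₁ _).mpr ⟨g, rfl⟩
        refine ⟨a₁ g x, Finset.mem_coe.mpr (hO₁s hmem), ?_⟩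
        rw [hπeq _ hmem, keyβ, hg]
      · have hw' : w ∈ t' := by rw [ht'def, Finset.mem_sdiff]; exact ⟨hw, hwO⟩
        obtain ⟨z, hz, hzw⟩ := hbij'.surjOn (Finset.mem_coe.mpr hw')
        rw [Finset.mem_coe, hs'def, Finset.mem_sdiff] at hz
        refine ⟨z, Finset.mem_coe.mpr hz.1, ?_⟩
        rw [hπeq' z hz.2]
        exact hzw
    · -- equivariance
      intro g z hz
      by_cases hzO : z ∈ O₁
      · obtain ⟨g', hg'⟩ := (memO₁ z).mp hzO
        have h1 : a₁ g z ∈ O₁ := (memO₁ _).mpr ⟨g * g', by rw [appmul, hg']⟩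
        rw [hπeq _ h1, hπeq z hzO, ← hg', ← appmul, keyβ, keyβ, appmul]
      · have hz' : z ∈ s' := by rw [hs'def, Finset.mem_sdiff]; exact ⟨hz, hzO⟩
        have h1 : a₁ g z ∈ s' := hcl₁' g z hz'
        have h1' : a₁ g z ∉ O₁ := by rw [hs'def, Finset.mem_sdiff] at h1; exact h1.2
        rw [hπeq' _ h1', hπeq' z hzO]
        exact hequi' g z hz'



theorem core_main {G X : Type*} [CommGroup G] [Fintype X] (a₁ a₂ : G →* Equiv.Perm X)
    (hstab : ∀ g x, a₁ g x = x ↔ a₂ g x = x) :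
    ∃ π : X → X, Function.Bijective π ∧ ∀ g x, π (a₁ g x) = a₂ g (π x) := by
  classical
  have hstab' : ∀ x, stabSet a₁ x = stabSet a₂ x := fun x => Set.ext fun g => hstab g x
  obtain ⟨π, hbij, hequi⟩ := core_aux a₁ a₂ (Fintype.card X) Finset.univ Finset.univ
    (by rw [Finset.card_univ]) (by simp) (by simp)
    (by
      intro H
      congr 1
      apply Finset.filter_congr
      intro z _
      rw [hstab'])
  refine ⟨π, ?_, fun g x => hequi g x (Finset.mem_univ x)⟩
  exact ⟨fun a b h => hbij.injOn (by simp) (by simp) h, fun b => by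
    obtain ⟨a, _, ha⟩ := hbij.surjOn (by simp : b ∈ ((univ : Finset X) : Set X))
    exact ⟨a, ha⟩⟩

open Finset in
lemma addsubgroup_eq_of_card_eq {n : ℕ} [NeZero n] {A B : AddSubgroup (ZMod n)}
    (h : Nat.card A = Nat.card B) : A = B := by
  classical
  set c := Nat.card A with hc
  have hcpos : 0 < c := Nat.card_pos
  have key : ∀ C : AddSubgroup (ZMod n), Nat.card C = c →
      (C : Set (ZMod n)).toFinset = univ.filter (fun x => c • x = 0) := by
    intro C hC
    have hsub : (C : Set (ZMod n)).toFinset ⊆ univ.filter (fun x => c • x = 0) := by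
      intro x hx
      simp only [Set.mem_toFinset, SetLike.mem_coe] at hx
      simp only [mem_filter, mem_univ, true_and]
      have h0 : (Nat.card C) • (⟨x, hx⟩ : C) = 0 := card_nsmul_eq_zero'
      rw [hC] at h0
      have := congrArg (Subtype.val) h0
      simpa using this
    apply Finset.eq_of_subset_of_card_le hsub
    calc (univ.filter (fun x => c • x = 0)).card ≤ c :=
          IsAddCyclic.card_nsmul_eq_zero_le hcpos
      _ = (C : Set (ZMod n)).toFinset.card := by
          rw [Set.toFinset_card, ← Nat.card_eq_fintype_card]
          exact hC.symm
  have h1 := key A rfl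
  have h2 := key B h.symm
  ext x
  have heq := h1.trans h2.symm
  constructor <;> intro hx
  · have : x ∈ (B : Set (ZMod n)).toFinset := by rw [← heq]; simpa using hx
    simpa using this
  · have : x ∈ (A : Set (ZMod n)).toFinset := by rw [heq]; simpa using hx
    simpa using this

def autUnits (n : ℕ) : AddAut (ZMod n) ≃* (ZMod n)ˣ where
  toFun f := Additive.toMul (ZMod.AddAutEquivUnits n f)
  invFun u := (ZMod.AddAutEquivUnits n).symm (Additive.ofMul u)
  left_inv f := (ZMod.AddAutEquivUnits n).symm_apply_apply f
  right_inv u := congrArg Additive.toMul ((ZMod.AddAutEquivUnits n).apply_symm_apply (Additive.ofMul u))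
  map_mul' f g := by
    ext
    change f (g 1) = f 1 * g 1
    symm
    rw [mul_comm, ← (g 1).intCast_zmod_cast, ← zsmul_eq_mul, ← map_zsmul, zsmul_one]

lemma addaut_apply {n : ℕ} (f : AddAut (ZMod n)) (x : ZMod n) :
    f x = (autUnits n f : ZMod n) * x := by
  have hc : (autUnits n f : ZMod n) = f 1 := rfl
  have h : (f 1) * x = f x := by
    rw [mul_comm, ← x.intCast_zmod_cast, ← zsmul_eq_mul, ← map_zsmul, zsmul_one]
  rw [hc, h]

def fixSub {n : ℕ} (c : (ZMod n)ˣ) : AddSubgroup (ZMod n) :=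
  (AddMonoidHom.mulLeft ((c : ZMod n) - 1)).ker

lemma mem_fixSub {n : ℕ} (c : (ZMod n)ˣ) (x : ZMod n) :
    x ∈ fixSub c ↔ (c : ZMod n) * x = x := by
  simp [fixSub, AddMonoidHom.mem_ker, sub_mul, sub_eq_zero, one_mul]

lemma hlift_eval {n : ℕ} (ρ l : AddAut (ZMod n)) (a b : ℤ) :
    (FreeGroup.lift ![ρ, l]) (FreeGroup.of 0 ^ a * FreeGroup.of 1 ^ b) = ρ ^ a * l ^ b := by
  rw [map_mul, map_zpow, map_zpow, FreeGroup.lift_apply_of, FreeGroup.lift_apply_of]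
  simp

lemma stab_match {n : ℕ} [NeZero n] (c₁ c₂ : (ZMod n)ˣ)
    (h : Nat.card {x : ZMod n // (c₁ : ZMod n) * x = x}
       = Nat.card {x : ZMod n // (c₂ : ZMod n) * x = x}) :
    ∀ x : ZMod n, (c₁ : ZMod n) * x = x ↔ (c₂ : ZMod n) * x = x := by
  have heq : fixSub c₁ = fixSub c₂ := by
    apply addsubgroup_eq_of_card_eq
    rw [Nat.card_congr (Equiv.subtypeEquivRight (mem_fixSub c₁)), h,
        ← Nat.card_congr (Equiv.subtypeEquivRight (mem_fixSub c₂))]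
  intro x
  rw [← mem_fixSub, ← mem_fixSub, heq]

def unitHom {n : ℕ} (u v : (ZMod n)ˣ) :
    Multiplicative ℤ × Multiplicative ℤ →* (ZMod n)ˣ :=
  MonoidHom.mk' (fun g => u ^ g.1.toAdd * v ^ g.2.toAdd) (by
    intro g h
    simp only [Prod.fst_mul, Prod.snd_mul, toAdd_mul, zpow_add]
    rw [mul_mul_mul_comm])

def actHom {n : ℕ} (u v : (ZMod n)ˣ) :
    Multiplicative ℤ × Multiplicative ℤ →* Equiv.Perm (ZMod n) :=
  (MulAction.toPermHom (ZMod n)ˣ (ZMod n)).comp (unitHom u v)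

lemma actHom_apply {n : ℕ} (u v : (ZMod n)ˣ) (g : Multiplicative ℤ × Multiplicative ℤ)
    (x : ZMod n) : actHom u v g x = ((u ^ g.1.toAdd * v ^ g.2.toAdd : (ZMod n)ˣ) : ZMod n) * x := by
  rfl

/-- Two ℤ-linear pique structures `(ρ₁, l₁)` and `(ρ₂, l₂)` on `ℤ/p^k` with the
same permutation character are permutationally similar, provided that either (a) `p` is odd, or
(b) `p = 2` and `k ∈ {1, 2}`, or (c) `p = 2`, `k > 2`, and both inner multiplication groups
(the subgroups generated by `{ρᵢ, lᵢ}`) are cyclic. -/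
theorem stmt6 (p k : ℕ) (hp : p.Prime) (hk : 0 < k)
    (ρ₁ l₁ ρ₂ l₂ : AddAut (ZMod (p ^ k)))
    (hchar : ∀ w : FreeGroup (Fin 2),
      Nat.card {x : ZMod (p ^ k) // (FreeGroup.lift ![ρ₁, l₁]) w x = x} =
        Nat.card {x : ZMod (p ^ k) // (FreeGroup.lift ![ρ₂, l₂]) w x = x})
    (hcase : Odd p ∨ (p = 2 ∧ (k = 1 ∨ k = 2)) ∨
      (p = 2 ∧ 2 < k ∧
        IsCyclic (Subgroup.closure {ρ₁, l₁} : Subgroup (AddAut (ZMod (p ^ k)))) ∧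
        IsCyclic (Subgroup.closure {ρ₂, l₂} : Subgroup (AddAut (ZMod (p ^ k)))))) :
    ∃ π : Equiv.Perm (ZMod (p ^ k)),
      ∀ x : ZMod (p ^ k), π (ρ₁ x) = ρ₂ (π x) ∧ π (l₁ x) = l₂ (π x) := by
  haveI : NeZero (p ^ k) := ⟨pow_ne_zero k hp.ne_zero⟩
  set e := autUnits (p ^ k) with hedef
  set u₁ := e ρ₁ with hu₁
  set v₁ := e l₁ with hv₁
  set u₂ := e ρ₂ with hu₂
  set v₂ := e l₂ with hv₂
  have hcard : ∀ a b : ℤ,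
      Nat.card {x : ZMod (p ^ k) // ((u₁ ^ a * v₁ ^ b : (ZMod (p ^ k))ˣ) : ZMod (p ^ k)) * x = x}
    = Nat.card {x : ZMod (p ^ k) // ((u₂ ^ a * v₂ ^ b : (ZMod (p ^ k))ˣ) : ZMod (p ^ k)) * x = x} := by
    intro a b
    have h := hchar (FreeGroup.of 0 ^ a * FreeGroup.of 1 ^ b)
    have e₁ : ∀ x : ZMod (p ^ k),
        (FreeGroup.lift ![ρ₁, l₁]) (FreeGroup.of 0 ^ a * FreeGroup.of 1 ^ b) x = x
        ↔ ((u₁ ^ a * v₁ ^ b : (ZMod (p ^ k))ˣ) : ZMod (p ^ k)) * x = x := by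
      intro x
      rw [hlift_eval, addaut_apply]
      rw [hedef] at hu₁ hv₁
      rw [map_mul, map_zpow, map_zpow, ← hu₁, ← hv₁]
    have e₂ : ∀ x : ZMod (p ^ k),
        (FreeGroup.lift ![ρ₂, l₂]) (FreeGroup.of 0 ^ a * FreeGroup.of 1 ^ b) x = x
        ↔ ((u₂ ^ a * v₂ ^ b : (ZMod (p ^ k))ˣ) : ZMod (p ^ k)) * x = x := by
      intro x
      rw [hlift_eval, addaut_apply]
      rw [hedef] at hu₂ hv₂
      rw [map_mul, map_zpow, map_zpow, ← hu₂, ← hv₂]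
    rw [← Nat.card_congr (Equiv.subtypeEquivRight e₁), h,
        Nat.card_congr (Equiv.subtypeEquivRight e₂)]
  have hstab : ∀ (g : Multiplicative ℤ × Multiplicative ℤ) (x : ZMod (p ^ k)),
      actHom u₁ v₁ g x = x ↔ actHom u₂ v₂ g x = x := by
    intro g x
    rw [actHom_apply, actHom_apply]
    exact stab_match _ _ (hcard g.1.toAdd g.2.toAdd) x
  obtain ⟨π, hbij, hequi⟩ := core_main (actHom u₁ v₁) (actHom u₂ v₂) hstab
  refine ⟨Equiv.ofBijective π hbij, ?_⟩
  intro x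
  constructor
  · have h := hequi (Multiplicative.ofAdd (1 : ℤ), Multiplicative.ofAdd (0 : ℤ)) x
    rw [actHom_apply, actHom_apply] at h
    simp only [toAdd_ofAdd, zpow_one, zpow_zero, mul_one] at h
    show π (ρ₁ x) = ρ₂ (π x)
    rw [addaut_apply ρ₁, addaut_apply ρ₂, ← hu₁, ← hu₂]
    exact h
  · have h := hequi (Multiplicative.ofAdd (0 : ℤ), Multiplicative.ofAdd (1 : ℤ)) x
    rw [actHom_apply, actHom_apply] at h
    simp only [toAdd_ofAdd, zpow_one, zpow_zero, one_mul] at h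
    show π (l₁ x) = l₂ (π x)
    rw [addaut_apply l₁, addaut_apply l₂, ← hv₁, ← hv₂]
    exact h
end

section
/- Two ℤ-linear piques (ρ₁, λ₁) and (ρ₂, λ₂) on the cyclic group ℤ/3 (where ρᵢ, λᵢ are automorphisms of ℤ/3, given by multiplication by units) are isomorphic — that is, there exists a bijection f : ℤ/3 → ℤ/3 with f(0) = 0 and f(ρ₁(x) + λ₁(y)) = ρ₂(f(x)) + λ₂(f(y)) for all x, y — if and only if they have the same permutation character, i.e., for every element w of the free group ⟨R, L⟩ on two generators the permutations w^{α₁} and w^{α₂} of ℤ/3 have equal numbers of fixed points (αᵢ : R ↦ ρᵢ, L ↦ λᵢ). -/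
lemma elem3 : ∀ x : ZMod 3, x = 0 ∨ x = 1 ∨ x = 2 := by decide

lemma aut_cases (a : AddAut (ZMod 3)) : (∀ x, a x = x) ∨ (∀ x, a x = -x) := by
  have h1 : a 1 ≠ 0 := by
    intro h
    have := a.injective (h.trans (map_zero a).symm)
    exact one_ne_zero this
  have h2 : (2 : ZMod 3) = 1 + 1 := by decide
  rcases (elem3 (a 1)).resolve_left h1 with h | h
  · left
    intro x
    rcases elem3 x with rfl | rfl | rfl
    · exact map_zero a
    · exact h
    · rw [h2, map_add, h]
  · right
    intro x
    rcases elem3 x with rfl | rfl | rfl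
    · simp [map_zero a]
    · rw [h]; decide
    · rw [h2, map_add, h]; decide

lemma equiv_cases (f : ZMod 3 ≃ ZMod 3) (h0 : f 0 = 0) :
    (∀ x, f x = x) ∨ (∀ x, f x = -x) := by
  have h1 : f 1 ≠ 0 := fun h => one_ne_zero (f.injective (h.trans h0.symm))
  rcases (elem3 (f 1)).resolve_left h1 with h | h
  · left
    intro x
    have h2 : f 2 = 2 := by
      have hne0 : f 2 ≠ 0 := fun hh => (by decide : (2:ZMod 3) ≠ 0) (f.injective (hh.trans h0.symm))
      have hne1 : f 2 ≠ 1 := fun hh => by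
        have := f.injective (hh.trans h.symm); exact (by decide : (2:ZMod 3) ≠ 1) this
      rcases elem3 (f 2) with hh | hh | hh
      · exact absurd hh hne0
      · exact absurd hh hne1
      · exact hh
    rcases elem3 x with rfl | rfl | rfl
    · exact h0
    · exact h
    · exact h2
  · right
    intro x
    have h2 : f 2 = 1 := by
      have hne0 : f 2 ≠ 0 := fun hh => (by decide : (2:ZMod 3) ≠ 0) (f.injective (hh.trans h0.symm))
      have hne2 : f 2 ≠ 2 := fun hh => by
        have := f.injective (hh.trans h.symm); exact (by decide : (2:ZMod 3) ≠ 1) this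
      rcases elem3 (f 2) with hh | hh | hh
      · exact absurd hh hne0
      · exact hh
      · exact absurd hh hne2
    rcases elem3 x with rfl | rfl | rfl
    · simpa using h0
    · rw [h]; decide
    · rw [h2]; decide

lemma card_id : Nat.card {x : ZMod 3 // x = x} = 3 := by
  rw [Nat.card_eq_fintype_card]; decide

lemma card_neg : Nat.card {x : ZMod 3 // -x = x} = 1 := by
  rw [Nat.card_eq_fintype_card]; decide

lemma count_eq (a b : AddAut (ZMod 3))
    (h : Nat.card {x : ZMod 3 // a x = x} = Nat.card {x : ZMod 3 // b x = x}) :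
    ∀ x, a x = b x := by
  have key : ∀ c : AddAut (ZMod 3), (∀ x, c x = x) →
      Nat.card {x : ZMod 3 // c x = x} = 3 := fun c hc => by
    rw [Nat.card_congr (Equiv.subtypeEquivRight (fun x => by rw [hc x]))]
    exact card_id
  have key2 : ∀ c : AddAut (ZMod 3), (∀ x, c x = -x) →
      Nat.card {x : ZMod 3 // c x = x} = 1 := fun c hc => by
    rw [Nat.card_congr (Equiv.subtypeEquivRight (fun x => by rw [hc x]))]
    exact card_neg
  rcases aut_cases a with ha | ha <;> rcases aut_cases b with hb | hb <;>
    intro x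
  · rw [ha, hb]
  · rw [key a ha, key2 b hb] at h; omega
  · rw [key2 a ha, key b hb] at h; omega
  · rw [ha, hb]

/-- ℤ-linear piques on `ℤ/3` are classified up to isomorphism by their
permutation characters: two pique structures `(ρ₁, l₁)` and `(ρ₂, l₂)` on `ℤ/3` are isomorphic
if and only if they have the same permutation character. -/
theorem stmt8 (ρ₁ l₁ ρ₂ l₂ : AddAut (ZMod 3)) :
    (∃ f : ZMod 3 ≃ ZMod 3, f 0 = 0 ∧
        ∀ x y : ZMod 3, f (ρ₁ x + l₁ y) = ρ₂ (f x) + l₂ (f y)) ↔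
      (∀ w : FreeGroup (Fin 2),
        Nat.card {x : ZMod 3 // (Multiplicative.toAdd ((FreeGroup.lift ![Multiplicative.ofAdd ρ₁, Multiplicative.ofAdd l₁]) w)) x = x} =
          Nat.card {x : ZMod 3 // (Multiplicative.toAdd ((FreeGroup.lift ![Multiplicative.ofAdd ρ₂, Multiplicative.ofAdd l₂]) w)) x = x}) := by
  constructor
  · rintro ⟨f, hf0, hf⟩ w
    have hρ : ∀ x, f (ρ₁ x) = ρ₂ (f x) := fun x => by
      have := hf x 0; simpa [hf0] using this
    have hl : ∀ y, f (l₁ y) = l₂ (f y) := fun y => by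
      have := hf 0 y; simpa [hf0] using this
    have hcomm : ∀ (c : AddAut (ZMod 3)) x, f (c x) = c (f x) := by
      rcases equiv_cases f hf0 with h | h
      · intro c x; rw [h, h]
      · intro c x; rw [h, h, map_neg]
    have hρeq : ∀ x, ρ₁ x = ρ₂ x := fun x =>
      f.injective ((hρ x).trans (hcomm ρ₂ x).symm)
    have hleq : ∀ x, l₁ x = l₂ x := fun x =>
      f.injective ((hl x).trans (hcomm l₂ x).symm)
    have : ρ₁ = ρ₂ := AddEquiv.ext hρeq
    subst this
    have : l₁ = l₂ := AddEquiv.ext hleq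
    subst this
    rfl
  · intro h
    have hρ := h (FreeGroup.of 0)
    have hl := h (FreeGroup.of 1)
    simp only [FreeGroup.lift_apply_of, Matrix.cons_val_zero, Matrix.cons_val_one, Matrix.head_cons, toAdd_ofAdd] at hρ hl
    have hρ' : ∀ x, ρ₁ x = ρ₂ x := count_eq _ _ hρ
    have hl' : ∀ x, l₁ x = l₂ x := count_eq _ _ hl
    exact ⟨Equiv.refl _, rfl, fun x y => by simp [hρ' x, hl' y]⟩
end

section
/- For each n ∈ {2, 4}: two ℤ-linear piques (ρ₁, λ₁) and (ρ₂, λ₂) on the cyclic group ℤ/n (where ρᵢ, λᵢ are automorphisms of ℤ/n, given by multiplication by units) are isomorphic — that is, there exists a bijection f : ℤ/n → ℤ/n with f(0) = 0 and f(ρ₁(x) + λ₁(y)) = ρ₂(f(x)) + λ₂(f(y)) for all x, y — if and only if they have the same permutation character, i.e., for every element w of the free group ⟨R, L⟩ on two generators the permutations w^{α₁} and w^{α₂} of ℤ/n have equal numbers of fixed points (αᵢ : R ↦ ρᵢ, L ↦ λᵢ). -/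
private lemma aut_apply (n : ℕ) [NeZero n] (φ : AddAut (ZMod n)) (x : ZMod n) :
    φ x = x * φ 1 := by
  have h : (x.val • (1 : ZMod n)) = x := by
    rw [nsmul_eq_mul, mul_one, ZMod.natCast_val, ZMod.cast_id]
  calc φ x = φ (x.val • 1) := by rw [h]
    _ = x.val • φ 1 := by rw [map_nsmul]
    _ = x * φ 1 := by rw [nsmul_eq_mul, ZMod.natCast_val, ZMod.cast_id]

private lemma card_fix_four : ∀ a b : ZMod 4, (a = 1 ∨ a = 3) → (b = 1 ∨ b = 3) →
    Fintype.card {x : ZMod 4 // x * a = x} = Fintype.card {x : ZMod 4 // x * b = x} →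
    a = b := by decide

private lemma iso_pair {n : ℕ} [NeZero n] (ρ₁ l₁ ρ₂ l₂ : AddAut (ZMod n))
    (h : ∃ f : ZMod n ≃ ZMod n, f 0 = 0 ∧
        ∀ x y : ZMod n, f (ρ₁ x + l₁ y) = ρ₂ (f x) + l₂ (f y)) :
    ρ₁ = ρ₂ ∧ l₁ = l₂ := by
  obtain ⟨f, hf0, hf⟩ := h
  have hρ : ∀ x, f (ρ₁ x) = ρ₂ (f x) := fun x => by simpa [hf0] using hf x 0
  have hl : ∀ y, f (l₁ y) = l₂ (f y) := fun y => by simpa [hf0] using hf 0 y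
  have hadd : ∀ a b : ZMod n, f (a + b) = f a + f b := by
    intro a b
    have h1 := hf (ρ₁.symm a) (l₁.symm b)
    rw [← hρ, ← hl, ρ₁.apply_symm_apply, l₁.apply_symm_apply] at h1
    exact h1
  have hF : ∀ x, f x = x * f 1 := fun x =>
    aut_apply n ({ toEquiv := f, map_add' := hadd } : AddAut (ZMod n)) x
  have hu : IsUnit (f 1) := by
    obtain ⟨x, hx⟩ := f.surjective 1
    exact IsUnit.of_mul_eq_one x (by rw [mul_comm, ← hF x, hx])
  constructor
  · ext x
    have h1 := hρ 1
    rw [hF (ρ₁ 1), aut_apply n ρ₂, hF 1, one_mul, mul_comm (f 1)] at h1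
    rw [aut_apply n ρ₁, aut_apply n ρ₂, hu.mul_right_cancel h1]
  · ext x
    have h1 := hl 1
    rw [hF (l₁ 1), aut_apply n l₂, hF 1, one_mul, mul_comm (f 1)] at h1
    rw [aut_apply n l₁, aut_apply n l₂, hu.mul_right_cancel h1]

/-- For `n ∈ {2, 4}`, ℤ-linear piques on `ℤ/n` are classified up to isomorphism
by their permutation characters. -/
theorem stmt9 (n : ℕ) (hn : n = 2 ∨ n = 4) (ρ₁ l₁ ρ₂ l₂ : AddAut (ZMod n)) :
    (∃ f : ZMod n ≃ ZMod n, f 0 = 0 ∧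
        ∀ x y : ZMod n, f (ρ₁ x + l₁ y) = ρ₂ (f x) + l₂ (f y)) ↔
      (∀ w : FreeGroup (Fin 2),
        Nat.card {x : ZMod n // Multiplicative.toAdd ((FreeGroup.lift ![Multiplicative.ofAdd ρ₁, Multiplicative.ofAdd l₁]) w) x = x} =
          Nat.card {x : ZMod n // Multiplicative.toAdd ((FreeGroup.lift ![Multiplicative.ofAdd ρ₂, Multiplicative.ofAdd l₂]) w) x = x}) := by
  haveI : NeZero n := by rcases hn with h | h <;> subst h <;> infer_instance
  constructor
  · intro h w
    obtain ⟨h1, h2⟩ := iso_pair ρ₁ l₁ ρ₂ l₂ h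
    rw [h1, h2]
  · intro h
    suffices hpair : ρ₁ = ρ₂ ∧ l₁ = l₂ by
      obtain ⟨h1, h2⟩ := hpair
      exact ⟨Equiv.refl _, rfl, fun x y => by simp [h1, h2]⟩
    have hR := h (FreeGroup.of 0)
    have hL := h (FreeGroup.of 1)
    simp only [FreeGroup.lift_apply_of, Matrix.cons_val_zero, toAdd_ofAdd] at hR
    simp only [FreeGroup.lift_apply_of, Matrix.cons_val_one, Matrix.head_cons, toAdd_ofAdd] at hL
    rcases hn with h2 | h4
    · subst h2
      have key : ∀ φ : AddAut (ZMod 2), ∀ x, φ x = x := by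
        intro φ x
        have h1 : φ 1 ≠ 0 := fun hc =>
          one_ne_zero (φ.injective (hc.trans (map_zero φ).symm))
        have h2 : ∀ a : ZMod 2, a ≠ 0 → a = 1 := by decide
        rw [aut_apply 2 φ x, h2 _ h1, mul_one]
      exact ⟨by ext x; rw [key ρ₁, key ρ₂], by ext x; rw [key l₁, key l₂]⟩
    · subst h4
      have units4 : ∀ φ : AddAut (ZMod 4), φ 1 = 1 ∨ φ 1 = 3 := by
        intro φ
        have hu : IsUnit (φ 1) := by
          obtain ⟨x, hx⟩ := φ.surjective 1
          exact IsUnit.of_mul_eq_one x (by rw [mul_comm, ← aut_apply 4 φ x, hx])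
        obtain ⟨u, hu⟩ := hu
        have h3 : ∀ u : (ZMod 4)ˣ, (u : ZMod 4) = 1 ∨ (u : ZMod 4) = 3 := by decide
        rw [← hu]; exact h3 u
      have key : ∀ φ₁ φ₂ : AddAut (ZMod 4),
          Nat.card {x : ZMod 4 // φ₁ x = x} = Nat.card {x : ZMod 4 // φ₂ x = x} →
          φ₁ = φ₂ := by
        intro φ₁ φ₂ hc
        have e1 : Nat.card {x : ZMod 4 // φ₁ x = x} =
            Fintype.card {x : ZMod 4 // x * φ₁ 1 = x} := by
          rw [Nat.card_congr (Equiv.subtypeEquivRight fun x => by rw [aut_apply 4 φ₁ x]),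
            Nat.card_eq_fintype_card]
        have e2 : Nat.card {x : ZMod 4 // φ₂ x = x} =
            Fintype.card {x : ZMod 4 // x * φ₂ 1 = x} := by
          rw [Nat.card_congr (Equiv.subtypeEquivRight fun x => by rw [aut_apply 4 φ₂ x]),
            Nat.card_eq_fintype_card]
        rw [e1, e2] at hc
        have h1 := card_fix_four (φ₁ 1) (φ₂ 1) (units4 φ₁) (units4 φ₂) hc
        ext x; rw [aut_apply 4 φ₁, aut_apply 4 φ₂, h1]
      exact ⟨key _ _ hR, key _ _ hL⟩
end

section
/- Consider the two ℤ-linear piques on ℤ/5 with multiplications x ∘₁ y = x + 2y and x ∘₂ y = x + 3y (i.e., ρ₁ = ρ₂ = id, λ₁ = multiplication by 2, λ₂ = multiplication by 3). Then: (1) they have the same permutation character, i.e., for every element w of the free group ⟨R, L⟩ on two generators the permutations w^{α₁} and w^{α₂} of ℤ/5 have equal numbers of fixed points (αᵢ : R ↦ ρᵢ, L ↦ λᵢ); (2) they are permutationally similar, i.e., there exists a permutation π of the set ℤ/5 with π(ρ₁(x)) = ρ₂(π(x)) and π(λ₁(x)) = λ₂(π(x)) for all x, equivalently π(2x) = 3·π(x)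 for all x; yet (3) they are not isomorphic: there is no bijection f : ℤ/5 → ℤ/5 with f(x + 2y) = f(x) + 3·f(y) for all x, y ∈ ℤ/5. -/
def mulAut {n : ℕ} (u : (ZMod n)ˣ) : AddAut (ZMod n) :=
  { toFun := fun x => (u : ZMod n) * x
    invFun := fun x => ((u⁻¹ : (ZMod n)ˣ) : ZMod n) * x
    left_inv := fun x => by
      show (u⁻¹ : (ZMod n)ˣ) * ((u : ZMod n) * x) = x
      rw [← mul_assoc, ← Units.val_mul, inv_mul_cancel, Units.val_one, one_mul]
    right_inv := fun x => by
      show (u : ZMod n) * (((u⁻¹ : (ZMod n)ˣ) : ZMod n) * x) = x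
      rw [← mul_assoc, ← Units.val_mul, mul_inv_cancel, Units.val_one, one_mul]
    map_add' := fun x y => mul_add _ _ _ }

/-- `mulAut` as a monoid homomorphism. -/
def mulAutHom (n : ℕ) : (ZMod n)ˣ →* Multiplicative (AddAut (ZMod n)) where
  toFun := fun u => Multiplicative.ofAdd (mulAut u)
  map_one' := by
    show Multiplicative.ofAdd (mulAut 1) = Multiplicative.ofAdd 0
    congr 1
    ext x
    show ((1 : (ZMod n)ˣ) : ZMod n) * x = x
    simp
  map_mul' a b := by
    show Multiplicative.ofAdd (mulAut (a * b)) = Multiplicative.ofAdd (mulAut a + mulAut b)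
    congr 1
    ext x
    show ((a * b : (ZMod n)ˣ) : ZMod n) * x = (a : ZMod n) * ((b : ZMod n) * x)
    push_cast
    ring

lemma lift_mulAut (u : (ZMod 5)ˣ) :
    FreeGroup.lift ![(1 : Multiplicative (AddAut (ZMod 5))), Multiplicative.ofAdd (mulAut u)] =
      (mulAutHom 5).comp (FreeGroup.lift ![(1 : (ZMod 5)ˣ), u]) := by
  apply FreeGroup.ext_hom
  intro i
  fin_cases i
  · simp only [FreeGroup.lift_apply_of, MonoidHom.comp_apply, Matrix.cons_val_zero]
    exact ((mulAutHom 5).map_one).symm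
  · simp [FreeGroup.lift_apply_of, mulAutHom]

lemma lift_inv :
    FreeGroup.lift ![(1 : (ZMod 5)ˣ), ZMod.unitOfCoprime 3 (by decide)] =
      (invMonoidHom).comp (FreeGroup.lift ![(1 : (ZMod 5)ˣ), ZMod.unitOfCoprime 2 (by decide)]) := by
  apply FreeGroup.ext_hom
  intro i
  fin_cases i
  · simp [FreeGroup.lift_apply_of, invMonoidHom]
  · simp only [FreeGroup.lift_apply_of, MonoidHom.comp_apply, Matrix.cons_val_one, Matrix.head_cons,
      invMonoidHom_apply]
    exact eq_inv_of_mul_eq_one_left (Units.ext (by decide))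

lemma fix_inv (v : (ZMod 5)ˣ) (x : ZMod 5) :
    (v : ZMod 5) * x = x ↔ ((v⁻¹ : (ZMod 5)ˣ) : ZMod 5) * x = x := by
  constructor <;> intro h
  · calc ((v⁻¹ : (ZMod 5)ˣ) : ZMod 5) * x
        = ((v⁻¹ : (ZMod 5)ˣ) : ZMod 5) * ((v : ZMod 5) * x) := by rw [h]
      _ = x := by rw [← mul_assoc, ← Units.val_mul, inv_mul_cancel, Units.val_one, one_mul]
  · calc (v : ZMod 5) * x
        = (v : ZMod 5) * (((v⁻¹ : (ZMod 5)ˣ) : ZMod 5) * x) := by rw [h]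
      _ = x := by rw [← mul_assoc, ← Units.val_mul, mul_inv_cancel, Units.val_one, one_mul]

/-- The ℤ-linear piques on `ℤ/5` with multiplications `x ∘₁ y = x + 2y` and
`x ∘₂ y = x + 3y` (1) have the same permutation character, and (2) are permutationally similar
(a permutation `π` with `π (2x) = 3 π x` suffices, the right multiplications being trivial),
yet (3) they are not isomorphic. -/
theorem stmt10 :
    (∀ w : FreeGroup (Fin 2),
      Nat.card {x : ZMod 5 //
        Multiplicative.toAdd ((FreeGroup.lift ![(1 : Multiplicative (AddAut (ZMod 5))),
          Multiplicative.ofAdd (mulAut (ZMod.unitOfCoprime 2 (by decide)))]) w) x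
          = x} =
      Nat.card {x : ZMod 5 //
        Multiplicative.toAdd ((FreeGroup.lift ![(1 : Multiplicative (AddAut (ZMod 5))),
          Multiplicative.ofAdd (mulAut (ZMod.unitOfCoprime 3 (by decide)))]) w) x
          = x}) ∧
    (∃ π : Equiv.Perm (ZMod 5), ∀ x : ZMod 5, π (2 * x) = 3 * π x) ∧
    ¬ (∃ f : ZMod 5 ≃ ZMod 5, ∀ x y : ZMod 5, f (x + 2 * y) = f x + 3 * f y) := by
  refine ⟨?_, ?_, ?_⟩
  · intro w
    set v : (ZMod 5)ˣ :=
      (FreeGroup.lift ![(1 : (ZMod 5)ˣ), ZMod.unitOfCoprime 2 (by decide)]) w with hv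
    refine Nat.card_congr (Equiv.subtypeEquivRight fun x => ?_)
    have h1 : Multiplicative.toAdd ((FreeGroup.lift ![(1 : Multiplicative (AddAut (ZMod 5))),
        Multiplicative.ofAdd (mulAut (ZMod.unitOfCoprime 2 (by decide)))]) w) x = (v : ZMod 5) * x := by
      rw [lift_mulAut]; rfl
    have h2 : Multiplicative.toAdd ((FreeGroup.lift ![(1 : Multiplicative (AddAut (ZMod 5))),
        Multiplicative.ofAdd (mulAut (ZMod.unitOfCoprime 3 (by decide)))]) w) x
        = ((v⁻¹ : (ZMod 5)ˣ) : ZMod 5) * x := by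
      rw [lift_mulAut, MonoidHom.comp_apply, lift_inv]; rfl
    rw [h1, h2]
    exact fix_inv v x
  · refine ⟨⟨fun x => x ^ 3, fun x => x ^ 3, fun x => ?_, fun x => ?_⟩, fun x => ?_⟩ <;>
      revert x <;> decide
  · rintro ⟨f, hf⟩
    have h1 : f 3 = f 1 + 3 * f 1 := by have h := hf 1 1; norm_num at h; exact h
    have h2 : f 2 = f 0 + 3 * f 1 := by have h := hf 0 1; norm_num at h; exact h
    have h0 : 3 * f 0 = 0 := by have h := hf 0 0; norm_num at h; exact h
    have h5 : (5 : ZMod 5) = 0 := by decide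
    have h4 : f 4 = f 0 + 3 * f 2 := by have h := hf 0 2; norm_num at h; exact h
    have hf0 : f 0 = 0 := by linear_combination 2 * h0 - f 0 * h5
    have h34 : f 3 = f 4 := by linear_combination h1 - h4 - 3 * h2 - 4 * hf0 - f 1 * h5
    exact absurd (f.injective h34) (by decide)
end

section
/- If two ℤ-linear piques (ρ₁, λ₁) and (ρ₂, λ₂) on the cyclic group ℤ/8 (where ρᵢ, λᵢ are automorphisms of ℤ/8, given by multiplication by units) have the same permutation character — i.e., for every element w of the free group ⟨R, L⟩ on two generators the permutations w^{α₁} and w^{α₂} of ℤ/8 have equal numbers of fixed points (αᵢ : R ↦ ρᵢ, L ↦ λᵢ) — then they are permutationally similar: there exists a permutation π of the set ℤ/8 with π(ρ₁(x)) = ρ₂(π(x)) and π(λ₁(x)) = λ₂(π(x)) for all x. -/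
private def fswap : ZMod 8 → ZMod 8 := fun u => if u = 3 then 7 else if u = 7 then 3 else u

private def cnt (u : ZMod 8) : ℕ := (Finset.univ.filter (fun x : ZMod 8 => u * x = x)).card

private lemma keyclass : ∀ u₁ v₁ u₂ v₂ : ZMod 8,
    (∃ y, u₁ * y = 1) → (∃ y, v₁ * y = 1) → (∃ y, u₂ * y = 1) → (∃ y, v₂ * y = 1) →
    cnt u₁ = cnt u₂ → cnt v₁ = cnt v₂ → cnt (u₁ * v₁) = cnt (u₂ * v₂) →
    (u₂ = u₁ ∧ v₂ = v₁) ∨ (u₂ = fswap u₁ ∧ v₂ = fswap v₁) := by decide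

private lemma keyswap : ∀ u : ZMod 8, (∃ y, u * y = 1) →
    ∀ x, Equiv.swap (3 : ZMod 8) 7 (u * x) = fswap u * Equiv.swap (3 : ZMod 8) 7 x := by decide

private lemma aut_eq_mul (ρ : AddAut (ZMod 8)) : ∀ x, ρ x = ρ 1 * x := by
  intro x
  have h : ((x.val : ℕ) : ZMod 8) = x := by simp [ZMod.natCast_val]
  calc ρ x = ρ (x.val • (1 : ZMod 8)) := by rw [nsmul_eq_mul, mul_one, h]
    _ = x.val • ρ 1 := map_nsmul ρ _ _
    _ = ρ 1 * x := by rw [nsmul_eq_mul, h]; ring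

private lemma aut_unit (ρ : AddAut (ZMod 8)) : ∃ y, ρ 1 * y = 1 :=
  ⟨ρ.symm 1, by rw [← aut_eq_mul ρ (ρ.symm 1)]; exact ρ.apply_symm_apply 1⟩

private lemma card_fix (u : ZMod 8) (g : AddAut (ZMod 8)) (h : ∀ x, g x = u * x) :
    Nat.card {x : ZMod 8 // g x = x} = cnt u := by
  simp only [h]
  rw [Nat.card_eq_fintype_card]
  exact Fintype.card_subtype _

/-- If two ℤ-linear pique structures `(ρ₁, l₁)` and `(ρ₂, l₂)` on `ℤ/8` have
the same permutation character, then they are permutationally similar. -/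
theorem stmt12 (ρ₁ l₁ ρ₂ l₂ : AddAut (ZMod 8))
    (hchar : ∀ w : FreeGroup (Fin 2),
      Nat.card {x : ZMod 8 // (FreeGroup.lift ![ρ₁.toEquiv, l₁.toEquiv]) w x = x} =
        Nat.card {x : ZMod 8 // (FreeGroup.lift ![ρ₂.toEquiv, l₂.toEquiv]) w x = x}) :
    ∃ π : Equiv.Perm (ZMod 8),
      ∀ x : ZMod 8, π (ρ₁ x) = ρ₂ (π x) ∧ π (l₁ x) = l₂ (π x) := by
  have hρ₁ := aut_eq_mul ρ₁
  have hl₁ := aut_eq_mul l₁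
  have hρ₂ := aut_eq_mul ρ₂
  have hl₂ := aut_eq_mul l₂
  have h1 := hchar (.of 0)
  have h2 := hchar (.of 1)
  have h3 := hchar (.of 0 * .of 1)
  simp only [FreeGroup.lift_apply_of, map_mul, Matrix.cons_val_zero, Matrix.cons_val_one,
    Matrix.head_cons, AddEquiv.toEquiv_eq_coe, Equiv.Perm.coe_mul, Function.comp_apply,
    AddEquiv.coe_toEquiv] at h1 h2 h3
  rw [card_fix (ρ₁ 1) ρ₁ hρ₁, card_fix (ρ₂ 1) ρ₂ hρ₂] at h1
  rw [card_fix (l₁ 1) l₁ hl₁, card_fix (l₂ 1) l₂ hl₂] at h2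
  erw [card_fix ((ρ₁ 1) * (l₁ 1)) (l₁.trans ρ₁) (fun x => by
        show ρ₁ (l₁ x) = _; rw [hl₁, hρ₁]; ring),
      card_fix ((ρ₂ 1) * (l₂ 1)) (l₂.trans ρ₂) (fun x => by
        show ρ₂ (l₂ x) = _; rw [hl₂, hρ₂]; ring)] at h3
  rcases keyclass (ρ₁ 1) (l₁ 1) (ρ₂ 1) (l₂ 1) (aut_unit ρ₁) (aut_unit l₁) (aut_unit ρ₂) (aut_unit l₂)
      h1 h2 h3 with ⟨e1, e2⟩ | ⟨e1, e2⟩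
  · exact ⟨Equiv.refl _, fun x => by
      simp only [Equiv.refl_apply]
      exact ⟨by rw [hρ₁, hρ₂, e1], by rw [hl₁, hl₂, e2]⟩⟩
  · refine ⟨Equiv.swap 3 7, fun x => ⟨?_, ?_⟩⟩
    · rw [hρ₁, hρ₂, e1]; exact keyswap (ρ₁ 1) (aut_unit ρ₁) x
    · rw [hl₁, hl₂, e2]; exact keyswap (l₁ 1) (aut_unit l₁) x
end
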